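/- Let {A_i}_{i∈Λ} ⊂ GL₂(ℝ) be a finite, non-conformal, totally irreducible family, and let p be a strictly positive probability vector on Λ. If B is a real 2×2 matrix such that for every i ∈ Λ and every x ∈ ℝ² the vectors B·A_i·x and A_i·B·x are linearly dependent, then B = β·I for some β ∈ ℝ. -/

import Mathlib

open MeasureTheory Filter Metric Set
open scoped ENNReal NNReal Topology RealInnerProductSpace Classical

noncomputable section

abbrev E2 := EuclideanSpace ℝ (Fin 2)
abbrev Mat2 := Matrix (Fin 2) (Fin 2) ℝ
abbrev Aff2 := Mat2 × E2

instance : MeasurableSpace Mat2 := inferInstanceAs (MeasurableSpace (Fin 2 → Fin 2 → ℝ))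

/-- A matrix viewed as a continuous linear map on euclidean `ℝ²`. -/
def matCLM (A : Mat2) : E2 →L[ℝ] E2 := Matrix.toEuclideanCLM (𝕜 := ℝ) A

/-- An affine map of `ℝ²`, represented as a pair (linear part, translation part). -/
def affApply (f : Aff2) (x : E2) : E2 := matCLM f.1 x + f.2

/-- Composition of affine maps. -/
def affComp (f g : Aff2) : Aff2 := (f.1 * g.1, affApply f g.2)

/-- The identity affine map. -/
def affId : Aff2 := (1, 0)

/-- The inverse of an (invertible) affine map. -/
def affInv (g : Aff2) : Aff2 := (g.1⁻¹, -(matCLM (g.1⁻¹) g.2))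

/-- The euclidean norm on affine maps of `ℝ²`, identified with `ℝ⁶`. -/
def affNorm (f : Aff2) : ℝ := Real.sqrt ((∑ i, ∑ j, (f.1 i j) ^ 2) + ∑ i, (f.2 i) ^ 2)

/-- A contracting map. -/
def IsContractingAff (f : Aff2) : Prop := ∃ r : ℝ≥0, r < 1 ∧ LipschitzWith r (affApply f)

/-- Composition `φ_{i₁} ∘ ⋯ ∘ φ_{iₙ}` along a word. -/
def wordAff {Λ : Type*} (φ : Λ → Aff2) {n : ℕ} (w : Fin n → Λ) : Aff2 :=
  (List.ofFn fun k => φ (w k)).foldr affComp affId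

/-- Product `A_{i₁} ⋯ A_{iₙ}` along a word. -/
def wordMat {Λ : Type*} (A : Λ → Mat2) {n : ℕ} (w : Fin n → Λ) : Mat2 :=
  (List.ofFn fun k => A (w k)).prod

/-- Composition along a word given as a list. -/
def listAff {Λ : Type*} (φ : Λ → Aff2) (l : List Λ) : Aff2 := (l.map φ).foldr affComp affId

/-- Matrix product along a word given as a list. -/
def listMat {Λ : Type*} (A : Λ → Mat2) (l : List Λ) : Mat2 := (l.map A).prod

/-- Exponential separation of the system `φ`. -/
def ExpSeparated {Λ : Type*} (φ : Λ → Aff2) : Prop :=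
  ∃ c : ℝ, 0 < c ∧ ∀ (n : ℕ) (w₁ w₂ : Fin n → Λ), w₁ ≠ w₂ →
    affNorm (wordAff φ w₁ - wordAff φ w₂) > c ^ n

/-- Total irreducibility: no finite nonempty set of lines is invariant under all the `A i`. -/
def TotallyIrreducible {Λ : Type*} (A : Λ → Mat2) : Prop :=
  ¬ ∃ S : Finset (Submodule ℝ E2), S.Nonempty ∧ (∀ W ∈ S, Module.finrank ℝ W = 1) ∧
      ∀ i, ∀ W ∈ S, Submodule.map (Matrix.toEuclideanLin (A i)) W ∈ S

/-- Non-conformality: in no coordinate system are all the `A i` scalar multiples of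
orthogonal matrices. -/
def NonConformal {Λ : Type*} (A : Λ → Mat2) : Prop :=
  ¬ ∃ B : Mat2, IsUnit B ∧ ∀ i, ∃ (c : ℝ) (O : Mat2), Matrix.transpose O * O = 1 ∧ B * A i * B⁻¹ = c • O

/-- The maps `φ i` have no common fixed point. -/
def NoCommonFixedPoint {Λ : Type*} (φ : Λ → Aff2) : Prop :=
  ¬ ∃ x : E2, ∀ i, affApply (φ i) x = x

/-- `μ` is the self-affine measure of the system `(φ, p)`: it is compactly supported and
satisfies `μ = ∑ pᵢ (φᵢ)μ`. -/
def IsSelfAffine {Λ : Type*} [Fintype Λ] (φ : Λ → Aff2) (p : Λ → ℝ) (μ : Measure E2) : Prop :=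
  (∃ K : Set E2, IsCompact K ∧ μ K = 1) ∧
    μ = ∑ i, ENNReal.ofReal (p i) • Measure.map (affApply (φ i)) μ

/-- Exact dimensionality of a measure. -/
def IsExactDim {X : Type*} [MeasurableSpace X] [PseudoMetricSpace X] (ν : Measure X) (s : ℝ) :
    Prop :=
  ∀ᵐ x ∂ν, Tendsto (fun r : ℝ => Real.log (ν (closedBall x r)).toReal / Real.log r)
    (nhdsWithin 0 (Set.Ioi 0)) (nhds s)

/-- Largest singular value `α₁(A) = ‖A‖`. -/
def alpha1 (A : Mat2) : ℝ := ‖matCLM A‖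

/-- Smallest singular value `α₂(A) = ‖A⁻¹‖⁻¹` (for invertible `A`). -/
def alpha2 (A : Mat2) : ℝ := ‖matCLM (A⁻¹)‖⁻¹

/-- `A` has distinct singular values. -/
def HasDistinctSV (A : Mat2) : Prop := alpha2 A < alpha1 A

/-- Orthogonal projection onto a subspace `W ≤ ℝ²`, as a map `ℝ² → ℝ²`. -/
def projMap (W : Submodule ℝ E2) : E2 →L[ℝ] E2 := W.subtypeL.comp (W.orthogonalProjectionOnto)

/-- The metric on `ℝP¹` (lines through the origin): `d(V,W) = ‖π_V − π_W‖`. -/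
def dRP1 (V W : Submodule ℝ E2) : ℝ := ‖projMap V - projMap W‖

/-- `W` is the direction of the major axis of the ellipse `A(unit ball)`. -/
def IsMajorDir (A : Mat2) (W : Submodule ℝ E2) : Prop :=
  ∃ v : E2, ‖v‖ = 1 ∧ ‖matCLM A v‖ = alpha1 A ∧ W = Submodule.span ℝ {matCLM A v}

/-- The major axis direction `L(A)` (an arbitrary choice among the major directions;
it is unique when the singular values of `A` are distinct). -/
def majorDir (A : Mat2) : Submodule ℝ E2 :=
  if h : ∃ W, IsMajorDir A W then h.choose else ⊥

/-- `-t·log₂ t`. -/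
def h2 (t : ℝ) : ℝ := -(t * Real.logb 2 t)

/-- Level-`n` dyadic interval. -/
def dyI (n : ℕ) (k : ℤ) : Set ℝ := Set.Ico ((k : ℝ) / 2 ^ n) (((k : ℝ) + 1) / 2 ^ n)

/-- Shannon entropy (base 2) of a measure on `ℝ` w.r.t. the level-`n` dyadic partition. -/
def Hdy1 (ν : Measure ℝ) (n : ℕ) : ℝ := ∑' k : ℤ, h2 (ν (dyI n k)).toReal

/-- Level-`n` dyadic square in `ℝ²`. -/
def dyC (n : ℕ) (k : ℤ × ℤ) : Set E2 := {x : E2 | x 0 ∈ dyI n k.1 ∧ x 1 ∈ dyI n k.2}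

/-- Shannon entropy (base 2) of a measure on `ℝ²` w.r.t. the level-`n` dyadic partition. -/
def Hdy2 (ν : Measure E2) (n : ℕ) : ℝ := ∑' k : ℤ × ℤ, h2 (ν (dyC n k)).toReal

/-- Level-`n` dyadic cell in the space of affine maps (identified with `ℝ⁶`). -/
def dyA (n : ℕ) (k : (Fin 2 → Fin 2 → ℤ) × (Fin 2 → ℤ)) : Set Aff2 :=
  {f : Aff2 | (∀ i j, f.1 i j ∈ dyI n (k.1 i j)) ∧ ∀ i, f.2 i ∈ dyI n (k.2 i)}

/-- Shannon entropy (base 2) of a measure on affine maps w.r.t. the level-`n` dyadic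
partition of `ℝ⁶`. -/
def HdyA (θ : Measure Aff2) (n : ℕ) : ℝ :=
  ∑' k : (Fin 2 → Fin 2 → ℤ) × (Fin 2 → ℤ), h2 (θ (dyA n k)).toReal

/-- The convolution `θ.ν`: push-forward of `θ × ν` under the action `(φ,x) ↦ φ(x)`. -/
def actConv (θ : Measure Aff2) (ν : Measure E2) : Measure E2 :=
  Measure.map (fun q : Aff2 × E2 => affApply q.1 q.2) (θ.prod ν)

/-- The measure `θ.x`: push-forward of `θ` under `φ ↦ φ(x)`. -/
def affPush (θ : Measure Aff2) (x : E2) : Measure E2 :=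
  Measure.map (fun f : Aff2 => affApply f x) θ

/-- `ν` is `(W,δ)`-concentrated: `1−δ` of its mass lies within distance `δ` of a
translate of `W`. -/
def Concentrated (ν : Measure E2) (W : Submodule ℝ E2) (δ : ℝ) : Prop :=
  ∃ b : E2, 1 - δ ≤ (ν (Metric.cthickening δ ((fun w => b + w) '' (W : Set E2)))).toReal

/-- Shannon entropy `H(p)` of a probability vector. -/
def entropyVec {Λ : Type*} [Fintype Λ] (p : Λ → ℝ) : ℝ := -∑ i, p i * Real.logb 2 (p i)

/-- The Lyapunov dimension determined by the entropy `Hp` and Lyapunov exponents `χ₁ ≥ χ₂`. -/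
def lyapDim (Hp χ₁ χ₂ : ℝ) : ℝ :=
  if Hp ≤ |χ₁| then Hp / |χ₁|
  else if Hp ≤ |χ₁| + |χ₂| then 1 + (Hp - |χ₁|) / |χ₂|
  else 2 * Hp / (|χ₁| + |χ₂|)

/-- The point of `ℝ²` with coordinates `(a, b)`. -/
def mkE2 (a b : ℝ) : E2 := (EuclideanSpace.equiv (Fin 2) ℝ).symm ![a, b]


/-- The scalar projection `x ↦ ⟪v, x⟫` of `ℝ²` onto the direction of `v`. -/
def sproj (v x : E2) : ℝ := inner ℝ v x

lemma cr_eq_zero_of_dep (u v : E2) (h : Module.finrank ℝ (Submodule.span ℝ {u, v}) ≤ 1) :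
    u 0 * v 1 - u 1 * v 0 = 0 := by
  by_cases hu : u = 0
  · have h0 : u 0 = 0 := by rw [hu]; rfl
    have h1 : u 1 = 0 := by rw [hu]; rfl
    rw [h0, h1]; ring
  · have h1 : Submodule.span ℝ {u} ≤ Submodule.span ℝ {u, v} :=
      Submodule.span_mono (Set.singleton_subset_iff.2 (Set.mem_insert u {v}))
    have hr : Module.finrank ℝ (Submodule.span ℝ ({u} : Set E2)) = 1 :=
      finrank_span_singleton hu
    have heq : Submodule.span ℝ ({u} : Set E2) = Submodule.span ℝ {u, v} :=
      Submodule.eq_of_le_of_finrank_le h1 (by omega)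
    have hv : v ∈ Submodule.span ℝ ({u} : Set E2) := by
      rw [heq]; exact Submodule.subset_span (by simp)
    obtain ⟨a, ha⟩ := Submodule.mem_span_singleton.1 hv
    have h0 : v 0 = a * u 0 := by rw [← ha]; rfl
    have h1 : v 1 = a * u 1 := by rw [← ha]; rfl
    rw [h0, h1]; ring

lemma scalar_of_parallel (N : Mat2)
    (h : ∀ y : Fin 2 → ℝ, y 0 * N.mulVec y 1 - y 1 * N.mulVec y 0 = 0) :
    N = N 0 0 • 1 := by
  have h0 := h ![1, 0]
  have h1 := h ![0, 1]
  have h2 := h ![1, 1]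
  simp [Matrix.mulVec, dotProduct, Fin.sum_univ_two] at h0 h1 h2
  ext i j
  fin_cases i <;> fin_cases j <;>
    simp [Matrix.smul_apply, Matrix.one_apply] <;> linarith

lemma comm_rel (Ai B : Mat2) (hA : IsUnit Ai.det) (hB : IsUnit B.det)
    (hk : ∀ x : Fin 2 → ℝ,
      ((B * Ai).mulVec x 0) * ((Ai * B).mulVec x 1)
        - ((B * Ai).mulVec x 1) * ((Ai * B).mulVec x 0) = 0) :
    ∃ cst : ℝ, (cst = 1 ∨ cst = -1) ∧ Ai * B = cst • (B * Ai) := by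
  have hS : IsUnit (B * Ai).det := by rw [Matrix.det_mul]; exact hB.mul hA
  set S := B * Ai with hSdef
  set N := (Ai * B) * S⁻¹ with hNdef
  have hpar : ∀ y : Fin 2 → ℝ, y 0 * N.mulVec y 1 - y 1 * N.mulVec y 0 = 0 := by
    intro y
    have := hk (S⁻¹.mulVec y)
    rw [Matrix.mulVec_mulVec, Matrix.mulVec_mulVec, Matrix.mul_nonsing_inv _ hS,
      Matrix.one_mulVec] at this
    simpa [hNdef, Matrix.mulVec_mulVec] using this
  obtain ⟨n, hn⟩ : ∃ n : ℝ, N = n • 1 := ⟨N 0 0, scalar_of_parallel N hpar⟩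
  have hmul : Ai * B = n • S := by
    have hNS : N * S = Ai * B := by
      rw [hNdef, mul_assoc, Matrix.nonsing_inv_mul _ hS, mul_one]
    rw [← hNS, hn, Matrix.smul_mul, one_mul]
  have hc2 : n ^ 2 = 1 := by
    have hdet : (Ai * B).det = (n • S).det := by rw [hmul]
    rw [Matrix.det_smul, Matrix.det_mul] at hdet
    rw [hSdef, Matrix.det_mul] at hdet
    have hne : Ai.det * B.det ≠ 0 := (hA.mul hB).ne_zero
    simp [Fintype.card_fin] at hdet
    have hz : (n ^ 2 - 1) * (Ai.det * B.det) = 0 := by linear_combination (-1 : ℝ) * hdet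
    rcases mul_eq_zero.1 hz with h | h
    · linarith
    · exact absurd h hne
  refine ⟨n, ?_, hmul⟩
  have hfac : (n - 1) * (n + 1) = 0 := by linear_combination hc2
  rcases mul_eq_zero.1 hfac with h | h
  · left; linarith
  · right; linarith

lemma trB0 (Ai B : Mat2) (hA : IsUnit Ai.det) (h : Ai * B = (-1 : ℝ) • (B * Ai)) :
    B.trace = 0 := by
  have h1 : B = (-1 : ℝ) • (Ai⁻¹ * (B * Ai)) := by
    calc B = Ai⁻¹ * (Ai * B) := by rw [← mul_assoc, Matrix.nonsing_inv_mul _ hA, one_mul]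
    _ = Ai⁻¹ * ((-1 : ℝ) • (B * Ai)) := by rw [h]
    _ = (-1 : ℝ) • (Ai⁻¹ * (B * Ai)) := by rw [Matrix.mul_smul]
  have h2 : B.trace = (-1 : ℝ) * (Ai⁻¹ * (B * Ai)).trace := by
    rw [← smul_eq_mul, ← Matrix.trace_smul, ← h1]
  rw [Matrix.trace_mul_comm, mul_assoc, Matrix.mul_nonsing_inv _ hA, mul_one] at h2
  linarith
lemma toEL_mul (M N : Mat2) :
    Matrix.toEuclideanLin (M * N) =
      (Matrix.toEuclideanLin M) ∘ₗ (Matrix.toEuclideanLin N) := by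
  ext v
  simp [Matrix.toEuclideanLin_apply, Matrix.mulVec_mulVec]

lemma finrank_ker_eq_one (M : Mat2) (hM : M ≠ 0) (hdet : M.det = 0) :
    Module.finrank ℝ (LinearMap.ker (Matrix.toEuclideanLin M)) = 1 := by
  obtain ⟨v, hv0, hv⟩ := (Matrix.exists_mulVec_eq_zero_iff).2 hdet
  set K := LinearMap.ker (Matrix.toEuclideanLin M) with hK
  have hbot : K ≠ ⊥ := by
    intro h
    have hm : ((WithLp.equiv 2 (Fin 2 → ℝ)).symm v) ∈ K := by
      rw [hK, LinearMap.mem_ker, WithLp.equiv_symm_apply, Matrix.toEuclideanLin_apply_piLp_toLp, hv]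
      rfl
    rw [h, Submodule.mem_bot] at hm
    exact hv0 (by simpa using congrArg (WithLp.equiv 2 (Fin 2 → ℝ)) hm)
  have htop : K ≠ ⊤ := by
    intro h
    apply hM
    have h0 : Matrix.toEuclideanLin M = 0 := LinearMap.ker_eq_top.1 h
    exact (Matrix.toEuclideanLin (𝕜 := ℝ) (m := Fin 2) (n := Fin 2)).injective
      (by rw [h0, map_zero])
  have hE : Module.finrank ℝ E2 = 2 := finrank_euclideanSpace_fin
  have hle : Module.finrank ℝ K ≤ 2 := le_trans (Submodule.finrank_le K) (le_of_eq hE)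
  have h0 : Module.finrank ℝ K ≠ 0 := fun h => hbot (Submodule.finrank_eq_zero.1 h)
  have h2 : Module.finrank ℝ K ≠ 2 := fun h =>
    htop (Submodule.eq_top_of_finrank_eq (by rw [h, hE]))
  omega

lemma finrank_range_eq_one (M : Mat2) (hM : M ≠ 0) (hdet : M.det = 0) :
    Module.finrank ℝ (LinearMap.range (Matrix.toEuclideanLin M)) = 1 := by
  have h := LinearMap.finrank_range_add_finrank_ker (Matrix.toEuclideanLin (𝕜 := ℝ) M)
  rw [finrank_ker_eq_one M hM hdet, finrank_euclideanSpace_fin] at h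
  omega

lemma map_ker_le (Ai B : Mat2) (cst lam : ℝ) (hc2 : cst * cst = 1)
    (hc : Ai * B = cst • (B * Ai)) :
    Submodule.map (Matrix.toEuclideanLin Ai)
        (LinearMap.ker (Matrix.toEuclideanLin (B - lam • 1)))
      ≤ LinearMap.ker (Matrix.toEuclideanLin (B - (cst * lam) • 1)) := by
  rintro y ⟨w, hw, rfl⟩
  rw [SetLike.mem_coe, LinearMap.mem_ker] at hw
  rw [LinearMap.mem_ker]
  have hmat : (B - (cst * lam) • 1) * Ai = cst • (Ai * (B - lam • 1)) := by
    rw [Matrix.sub_mul, Matrix.mul_sub, smul_sub, Matrix.smul_mul, Matrix.mul_smul, hc,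
      smul_smul, smul_smul]
    rw [hc2, one_smul, mul_one, one_mul]
  rw [← LinearMap.comp_apply, ← toEL_mul, hmat]
  rw [_root_.map_smul]
  simp only [LinearMap.smul_apply, toEL_mul, LinearMap.comp_apply, hw, map_zero, smul_zero]

lemma inv_comm (Ai B : Mat2) (hA : IsUnit Ai.det) (cst : ℝ) (hc2 : cst * cst = 1)
    (hc : Ai * B = cst • (B * Ai)) : Ai⁻¹ * B = cst • (B * Ai⁻¹) := by
  have h1 : B * Ai = cst • (Ai * B) := by
    rw [hc, smul_smul, hc2, one_smul]
  calc Ai⁻¹ * B = Ai⁻¹ * (B * Ai) * Ai⁻¹ := by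
        rw [mul_assoc, mul_assoc, Matrix.mul_nonsing_inv _ hA, mul_one]
    _ = Ai⁻¹ * (cst • (Ai * B)) * Ai⁻¹ := by rw [h1]
    _ = cst • (Ai⁻¹ * Ai * B * Ai⁻¹) := by
        rw [Matrix.mul_smul, Matrix.smul_mul]; congr 1; noncomm_ring
    _ = cst • (B * Ai⁻¹) := by rw [Matrix.nonsing_inv_mul _ hA, one_mul]

lemma map_ker_eq (Ai B : Mat2) (hA : IsUnit Ai.det) (cst lam : ℝ) (hc2 : cst * cst = 1)
    (hc : Ai * B = cst • (B * Ai)) :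
    Submodule.map (Matrix.toEuclideanLin Ai)
        (LinearMap.ker (Matrix.toEuclideanLin (B - lam • 1)))
      = LinearMap.ker (Matrix.toEuclideanLin (B - (cst * lam) • 1)) := by
  refine le_antisymm (map_ker_le Ai B cst lam hc2 hc) ?_
  intro w hw
  have h2 := map_ker_le Ai⁻¹ B cst (cst * lam) hc2 (inv_comm Ai B hA cst hc2 hc)
  have hcl : cst * (cst * lam) = lam := by rw [← mul_assoc, hc2, one_mul]
  rw [hcl] at h2
  refine ⟨Matrix.toEuclideanLin Ai⁻¹ w, h2 ⟨w, hw, rfl⟩, ?_⟩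
  rw [← LinearMap.comp_apply, ← toEL_mul, Matrix.mul_nonsing_inv _ hA]
  simp [Matrix.toEuclideanLin_apply, Matrix.one_mulVec]
lemma col_ext (M : Mat2) (h0 : M.mulVec ![1, 0] = 0) (h1 : M.mulVec ![0, 1] = 0) :
    M = 0 := by
  ext i j
  have e0 := congrFun h0 i
  have e1 := congrFun h1 i
  simp [Matrix.mulVec, dotProduct, Fin.sum_univ_two] at e0 e1
  fin_cases j <;> simpa
lemma sum_col (M : Mat2) (i : Fin 2) :
    M.mulVec ![1, 1] i = M.mulVec ![1, 0] i + M.mulVec ![0, 1] i := by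
  simp [Matrix.mulVec, dotProduct, Fin.sum_univ_two]

lemma exists_good_vec (M N : Mat2) (hM : M ≠ 0) (hN : N ≠ 0) :
    ∃ x : Fin 2 → ℝ, M.mulVec x ≠ 0 ∧ N.mulVec x ≠ 0 := by
  by_contra hcon
  push_neg at hcon
  have h : ∀ x : Fin 2 → ℝ, M.mulVec x = 0 ∨ N.mulVec x = 0 := by
    intro x
    by_cases hx : M.mulVec x = 0
    · exact Or.inl hx
    · exact Or.inr (hcon x hx)
  have hsum : ∀ (P : Mat2), P.mulVec ![1, 1] = 0 → P.mulVec ![1, 0] = 0 → P = 0 := by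
    intro P hP hP0
    refine col_ext P hP0 ?_
    funext i
    have := sum_col P i
    rw [congrFun hP i, congrFun hP0 i] at this
    simpa using this.symm
  have hsum' : ∀ (P : Mat2), P.mulVec ![1, 1] = 0 → P.mulVec ![0, 1] = 0 → P = 0 := by
    intro P hP hP1
    refine col_ext P ?_ hP1
    funext i
    have := sum_col P i
    rw [congrFun hP i, congrFun hP1 i] at this
    simpa using this.symm
  rcases h ![1, 0] with h0 | h0 <;> rcases h ![0, 1] with h1 | h1 <;>
    rcases h ![1, 1] with h2 | h2
  · exact hM (col_ext M h0 h1)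
  · exact hM (col_ext M h0 h1)
  · exact hM (hsum M h2 h0)
  · exact hN (hsum' N h2 h1)
  · exact hM (hsum' M h2 h1)
  · exact hN (hsum N h2 h0)
  · exact hN (col_ext N h0 h1)
  · exact hN (col_ext N h0 h1)

lemma vec_parallel (u v : Fin 2 → ℝ) (h : u 0 * v 1 - u 1 * v 0 = 0) (hu : u ≠ 0) :
    ∃ a : ℝ, v = a • u := by
  have hne : u 0 ≠ 0 ∨ u 1 ≠ 0 := by
    by_contra hc
    push_neg at hc
    exact hu (funext fun i => by fin_cases i <;> simp [hc.1, hc.2])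
  rcases hne with h0 | h1
  · refine ⟨v 0 / u 0, funext fun i => ?_⟩
    fin_cases i <;> simp [Pi.smul_apply, smul_eq_mul]
    · field_simp
    · field_simp; nlinarith [h]
  · refine ⟨v 1 / u 1, funext fun i => ?_⟩
    fin_cases i <;> simp [Pi.smul_apply, smul_eq_mul]
    · field_simp; nlinarith [h]
    · field_simp
def Jm : Mat2 := !![0, -1; 1, 0]

lemma B0_sq (B : Mat2) :
    (B - ((B.trace) / 2) • 1) * (B - ((B.trace) / 2) • 1)
      = ((B.trace) ^ 2 / 4 - B.det) • 1 := by
  have ht : B.trace = B 0 0 + B 1 1 := Matrix.trace_fin_two B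
  have hd : B.det = B 0 0 * B 1 1 - B 0 1 * B 1 0 := Matrix.det_fin_two B
  ext i j
  fin_cases i <;> fin_cases j <;>
    simp [Matrix.mul_apply, Fin.sum_univ_two, Matrix.sub_apply, Matrix.smul_apply,
      Matrix.one_apply, ht, hd] <;> ring

lemma det_sub_lam (B : Mat2) (lam : ℝ) :
    (B - lam • 1).det = lam ^ 2 - B.trace * lam + B.det := by
  have ht : B.trace = B 0 0 + B 1 1 := Matrix.trace_fin_two B
  have hd : B.det = B 0 0 * B 1 1 - B 0 1 * B 1 0 := Matrix.det_fin_two B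
  rw [Matrix.det_fin_two, ht, hd]
  simp [Matrix.sub_apply, Matrix.smul_apply, Matrix.one_apply]
  ring

lemma conformal_of_MtM (M : Mat2) (s : ℝ) (hs : 0 < s) (h : Matrix.transpose M * M = s • 1) :
    ∃ (cst : ℝ) (O : Mat2), Matrix.transpose O * O = 1 ∧ M = cst • O := by
  set cst := Real.sqrt s with hc
  have hc0 : cst ≠ 0 := ne_of_gt (Real.sqrt_pos.2 hs)
  have hc2 : cst * cst = s := Real.mul_self_sqrt hs.le
  refine ⟨cst, cst⁻¹ • M, ?_, ?_⟩
  · have h1 : cst⁻¹ * cst⁻¹ * s = 1 := by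
      rw [← hc2]; field_simp
    rw [Matrix.transpose_smul, Matrix.smul_mul, Matrix.mul_smul, h, smul_smul, smul_smul, h1,
      one_smul]
  · rw [smul_smul, mul_inv_cancel₀ hc0, one_smul]

-- entry relations for M commuting/anticommuting with Jm
lemma comm_Jm_entries (M : Mat2) (h : M * Jm = Jm * M) :
    M 0 1 = -(M 1 0) ∧ M 1 1 = M 0 0 := by
  have h00 := congrFun (congrFun h 0) 0
  have h01 := congrFun (congrFun h 0) 1
  simp [Jm, Matrix.mul_apply, Fin.sum_univ_two] at h00 h01
  constructor <;> linarith
lemma anticomm_Jm_entries (M : Mat2) (h : M * Jm = (-1 : ℝ) • (Jm * M)) :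
    M 0 1 = M 1 0 ∧ M 1 1 = -(M 0 0) := by
  have h00 := congrFun (congrFun h 0) 0
  have h01 := congrFun (congrFun h 0) 1
  simp [Jm, Matrix.mul_apply, Matrix.vecMul, dotProduct, Fin.sum_univ_two] at h00 h01
  constructor <;> linarith

lemma MtM_comm (M : Mat2) (h1 : M 0 1 = -(M 1 0)) (h2 : M 1 1 = M 0 0) :
    Matrix.transpose M * M = ((M 0 0) ^ 2 + (M 1 0) ^ 2) • 1 ∧ M.det = (M 0 0) ^ 2 + (M 1 0) ^ 2 := by
  constructor
  · ext i j
    fin_cases i <;> fin_cases j <;>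
      simp [Matrix.mul_apply, Fin.sum_univ_two, Matrix.transpose_apply, Matrix.smul_apply,
        Matrix.one_apply, h1, h2] <;> ring
  · rw [Matrix.det_fin_two, h1, h2]; ring
lemma MtM_anticomm (M : Mat2) (h1 : M 0 1 = M 1 0) (h2 : M 1 1 = -(M 0 0)) :
    Matrix.transpose M * M = ((M 0 0) ^ 2 + (M 1 0) ^ 2) • 1 ∧ M.det = -((M 0 0) ^ 2 + (M 1 0) ^ 2) := by
  constructor
  · ext i j
    fin_cases i <;> fin_cases j <;>
      simp [Matrix.mul_apply, Fin.sum_univ_two, Matrix.transpose_apply, Matrix.smul_apply,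
        Matrix.one_apply, h1, h2] <;> ring
  · rw [Matrix.det_fin_two, h1, h2]; ring

-- construction of P from J' with J'*J' = -1
lemma P_exists (J' : Mat2) (hJ : J' * J' = -1) :
    ∃ P : Mat2, IsUnit P.det ∧ P * Jm = J' * P := by
  have e00 := congrFun (congrFun hJ 0) 0
  have e10 := congrFun (congrFun hJ 1) 0
  simp [Matrix.mul_apply, Fin.sum_univ_two, Matrix.neg_apply, Matrix.one_apply] at e00 e10
  have hc : J' 1 0 ≠ 0 := by
    intro h
    rw [h] at e00
    nlinarith [e00, sq_nonneg (J' 0 0)]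
  refine ⟨!![1, J' 0 0; 0, J' 1 0], ?_, ?_⟩
  · rw [Matrix.det_fin_two_of]
    simpa using hc
  · ext i j
    fin_cases i <;> fin_cases j <;>
      simp [Jm, Matrix.mul_apply, Fin.sum_univ_two] <;> nlinarith [e00, e10]


/-- **Lemma 5.9.** If `{A_i}` is a finite, non-conformal, totally irreducible family in
`GL₂(ℝ)` and `B` is a `2×2` matrix such that `B·A_i·x` and `A_i·B·x` are linearly
dependent for every `i` and `x`, then `B` is a scalar matrix. -/
theorem stmt18 (Λ : Type) [Fintype Λ] [Nonempty Λ]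
    (A : Λ → Mat2)
    (hinv : ∀ i, IsUnit (A i))
    (hnc : NonConformal A)
    (hti : TotallyIrreducible A)
    (p : Λ → ℝ) (hppos : ∀ i, 0 < p i) (hpsum : ∑ i, p i = 1)
    (B : Mat2)
    (hdep : ∀ (i : Λ) (x : E2),
      Module.finrank ℝ
        (Submodule.span ℝ {matCLM B (matCLM (A i) x), matCLM (A i) (matCLM B x)}) ≤ 1) :
    ∃ β : ℝ, B = β • (1 : Mat2) := by
  by_cases hB0 : B = 0
  · exact ⟨0, by simp [hB0]⟩
  have hAdet : ∀ i, IsUnit (A i).det := fun i => (Matrix.isUnit_iff_isUnit_det _).1 (hinv i)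
  have hkey : ∀ (i : Λ) (x : Fin 2 → ℝ),
      ((B * A i).mulVec x 0) * ((A i * B).mulVec x 1)
        - ((B * A i).mulVec x 1) * ((A i * B).mulVec x 0) = 0 := by
    intro i x
    have h := cr_eq_zero_of_dep (matCLM B (matCLM (A i) ((WithLp.equiv 2 (Fin 2 → ℝ)).symm x)))
      (matCLM (A i) (matCLM B ((WithLp.equiv 2 (Fin 2 → ℝ)).symm x))) (hdep i _)
    have e1 : ∀ j : Fin 2, matCLM B (matCLM (A i) ((WithLp.equiv 2 (Fin 2 → ℝ)).symm x)) j
        = (B * A i).mulVec x j := by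
      intro j; rw [← Matrix.mulVec_mulVec]; rfl
    have e2 : ∀ j : Fin 2, matCLM (A i) (matCLM B ((WithLp.equiv 2 (Fin 2 → ℝ)).symm x)) j
        = (A i * B).mulVec x j := by
      intro j; rw [← Matrix.mulVec_mulVec]; rfl
    rw [e1 0, e1 1, e2 0, e2 1] at h
    exact h
  by_cases hBdet : IsUnit B.det
  · obtain hcc := fun i => comm_rel (A i) B (hAdet i) hBdet (hkey i)
    choose c hc1 hc2 using hcc
    by_contra hcon
    set t := B.trace with htdef
    set d := B.det with hddef
    have htr : ∀ i, c i = -1 → t = 0 := fun i hci =>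
      trB0 (A i) B (hAdet i) (by rw [← hci]; exact hc2 i)
    have hcsq : ∀ i, c i * c i = 1 := by
      intro i; rcases hc1 i with h | h <;> rw [h] <;> norm_num
    by_cases hdlt : t ^ 2 - 4 * d < 0
    · -- complex eigenvalues: contradict non-conformality
      have hd4 : (0:ℝ) < d - t ^ 2 / 4 := by linarith
      set bb := Real.sqrt (d - t ^ 2 / 4) with hbb
      have hb0 : bb ≠ 0 := ne_of_gt (Real.sqrt_pos.2 hd4)
      have hb2 : bb ^ 2 = d - t ^ 2 / 4 := Real.sq_sqrt hd4.le
      set B0 := B - (t / 2) • 1 with hB0def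
      have hB0sq : B0 * B0 = (t ^ 2 / 4 - d) • 1 := by
        rw [hB0def, htdef, hddef]; exact B0_sq B
      have hB0c : ∀ i, A i * B0 = c i • (B0 * A i) := by
        intro i
        rcases hc1 i with hci | hci
        · have h1 : A i * B = B * A i := by rw [hc2 i, hci, one_smul]
          rw [hB0def, Matrix.mul_sub, Matrix.sub_mul, Matrix.mul_smul, Matrix.smul_mul,
            mul_one, one_mul, h1, hci, one_smul]
        · have ht0 : t = 0 := htr i hci
          have hB0B : B0 = B := by rw [hB0def, ht0]; norm_num
          rw [hB0B]; exact hc2 i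
      set J' := bb⁻¹ • B0 with hJ'def
      have hJsq : J' * J' = -1 := by
        rw [hJ'def, Matrix.smul_mul, Matrix.mul_smul, smul_smul, hB0sq, smul_smul]
        have hval : bb⁻¹ * bb⁻¹ * (t ^ 2 / 4 - d) = -1 := by
          have h' : t ^ 2 / 4 - d = -(bb * bb) := by nlinarith [hb2]
          rw [h', show bb⁻¹ * bb⁻¹ * -(bb * bb) = -((bb⁻¹ * bb) * (bb⁻¹ * bb)) by ring,
            inv_mul_cancel₀ hb0]
          norm_num
        rw [hval, neg_smul, one_smul]
      obtain ⟨P, hPdet, hPJ⟩ := P_exists J' hJsq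
      have hPinvDet : IsUnit (P⁻¹).det := Matrix.isUnit_nonsing_inv_det P hPdet
      apply hnc
      refine ⟨P⁻¹, (Matrix.isUnit_iff_isUnit_det _).2 hPinvDet, fun i => ?_⟩
      have hMinv : P⁻¹ * A i * (P⁻¹)⁻¹ = P⁻¹ * A i * P := by
        rw [Matrix.nonsing_inv_nonsing_inv _ hPdet]
      set M := P⁻¹ * A i * P with hMdef
      have hAJ : A i * J' = c i • (J' * A i) := by
        rw [hJ'def, Matrix.mul_smul, hB0c i, Matrix.smul_mul, smul_smul, smul_smul, mul_comm]
      have hJP : Jm * P⁻¹ = P⁻¹ * J' := by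
        calc Jm * P⁻¹ = P⁻¹ * P * Jm * P⁻¹ := by rw [Matrix.nonsing_inv_mul _ hPdet, one_mul]
        _ = P⁻¹ * (P * Jm) * P⁻¹ := by rw [mul_assoc P⁻¹ P Jm]
        _ = P⁻¹ * (J' * P) * P⁻¹ := by rw [hPJ]
        _ = P⁻¹ * J' * (P * P⁻¹) := by rw [← mul_assoc, mul_assoc]
        _ = P⁻¹ * J' := by rw [Matrix.mul_nonsing_inv _ hPdet, mul_one]
      have hMJ : M * Jm = c i • (Jm * M) := by
        have h1 : A i * (P * Jm) = c i • (J' * (A i * P)) := by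
          rw [hPJ, ← mul_assoc, hAJ, Matrix.smul_mul, mul_assoc]
        calc M * Jm = P⁻¹ * (A i * (P * Jm)) := by rw [hMdef]; noncomm_ring
        _ = P⁻¹ * (c i • (J' * (A i * P))) := by rw [h1]
        _ = c i • (P⁻¹ * J' * (A i * P)) := by rw [Matrix.mul_smul, mul_assoc]
        _ = c i • (Jm * P⁻¹ * (A i * P)) := by rw [hJP]
        _ = c i • (Jm * M) := by rw [hMdef]; congr 1; noncomm_ring
      have hMunit : IsUnit M.det := by
        rw [hMdef, Matrix.det_mul, Matrix.det_mul]
        exact (hPinvDet.mul (hAdet i)).mul hPdet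
      have htail : Matrix.transpose M * M = ((M 0 0) ^ 2 + (M 1 0) ^ 2) • 1 ∧
          ((M 0 0) ^ 2 + (M 1 0) ^ 2 ≠ 0) := by
        rcases hc1 i with hci | hci
        · rw [hci, one_smul] at hMJ
          obtain ⟨e1, e2⟩ := comm_Jm_entries M hMJ
          obtain ⟨hMt, hMd⟩ := MtM_comm M e1 e2
          exact ⟨hMt, by rw [← hMd]; exact hMunit.ne_zero⟩
        · rw [hci] at hMJ
          obtain ⟨e1, e2⟩ := anticomm_Jm_entries M hMJ
          obtain ⟨hMt, hMd⟩ := MtM_anticomm M e1 e2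
          refine ⟨hMt, fun h => hMunit.ne_zero ?_⟩
          rw [hMd, h, neg_zero]
      have hspos : (0:ℝ) < (M 0 0) ^ 2 + (M 1 0) ^ 2 := by
        rcases lt_or_eq_of_le (by positivity : (0:ℝ) ≤ (M 0 0) ^ 2 + (M 1 0) ^ 2) with h | h
        · exact h
        · exact absurd h.symm htail.2
      obtain ⟨cst, O, hO, hMO⟩ := conformal_of_MtM M _ hspos htail.1
      exact ⟨cst, O, hO, by rw [hMinv]; exact hMO⟩
    · -- real eigenvalues
      have hd0 : (0:ℝ) ≤ t ^ 2 - 4 * d := not_lt.1 hdlt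
      set sq := Real.sqrt (t ^ 2 - 4 * d) with hsq
      have hs2 : sq ^ 2 = t ^ 2 - 4 * d := Real.sq_sqrt hd0
      set l1 := (t + sq) / 2 with hl1
      set l2 := (t - sq) / 2 with hl2
      have hdet1 : (B - l1 • 1).det = 0 := by
        rw [det_sub_lam, ← htdef, ← hddef, hl1]; linear_combination (1/4 : ℝ) * hs2
      have hdet2 : (B - l2 • 1).det = 0 := by
        rw [det_sub_lam, ← htdef, ← hddef, hl2]; linear_combination (1/4 : ℝ) * hs2
      have hne : ∀ lam : ℝ, B - lam • 1 ≠ 0 := by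
        intro lam h
        exact hcon ⟨lam, sub_eq_zero.1 h⟩
      apply hti
      refine ⟨{LinearMap.ker (Matrix.toEuclideanLin (B - l1 • 1)),
               LinearMap.ker (Matrix.toEuclideanLin (B - l2 • 1))}, ?_, ?_, ?_⟩
      · exact Finset.insert_nonempty _ _
      · intro W hW
        rcases Finset.mem_insert.1 hW with h | h
        · rw [h]; exact finrank_ker_eq_one _ (hne l1) hdet1
        · rw [Finset.mem_singleton.1 h]; exact finrank_ker_eq_one _ (hne l2) hdet2
      · intro i W hW
        have hmem : ∀ lam : ℝ, lam = l1 ∨ lam = l2 →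
            LinearMap.ker (Matrix.toEuclideanLin (B - lam • 1)) ∈
              ({LinearMap.ker (Matrix.toEuclideanLin (B - l1 • 1)),
                LinearMap.ker (Matrix.toEuclideanLin (B - l2 • 1))} :
                  Finset (Submodule ℝ E2)) := by
          intro lam h
          rcases h with h | h <;> rw [h]
          · exact Finset.mem_insert_self _ _
          · exact Finset.mem_insert_of_mem (Finset.mem_singleton_self _)
        rcases Finset.mem_insert.1 hW with h | h
        · rw [h, map_ker_eq (A i) B (hAdet i) (c i) l1 (hcsq i) (hc2 i)]
          apply hmem
          rcases hc1 i with hci | hci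
          · left; rw [hci, one_mul]
          · right; have ht0 := htr i hci; rw [hci, hl1, hl2, ht0]; ring
        · rw [Finset.mem_singleton.1 h,
            map_ker_eq (A i) B (hAdet i) (c i) l2 (hcsq i) (hc2 i)]
          apply hmem
          rcases hc1 i with hci | hci
          · right; rw [hci, one_mul]
          · left; have ht0 := htr i hci; rw [hci, hl1, hl2, ht0]; ring
  · -- singular case
    exfalso
    have hdet0 : B.det = 0 := by
      by_contra h; exact hBdet (isUnit_iff_ne_zero.2 h)
    apply hti
    refine ⟨{LinearMap.range (Matrix.toEuclideanLin B)}, Finset.singleton_nonempty _, ?_, ?_⟩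
    · intro V hV
      rw [Finset.mem_singleton.1 hV]
      exact finrank_range_eq_one B hB0 hdet0
    · intro i V hV
      rw [Finset.mem_singleton.1 hV, Finset.mem_singleton]
      have hNne : A i * B ≠ 0 := by
        intro h
        apply hB0
        calc B = (A i)⁻¹ * (A i * B) := by
              rw [← mul_assoc, Matrix.nonsing_inv_mul _ (hAdet i), one_mul]
        _ = 0 := by rw [h, mul_zero]
      have hMne : B * A i ≠ 0 := by
        intro h
        apply hB0
        calc B = (B * A i) * (A i)⁻¹ := by
              rw [mul_assoc, Matrix.mul_nonsing_inv _ (hAdet i), mul_one]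
        _ = 0 := by rw [h, zero_mul]
      obtain ⟨x, hMx, hNx⟩ := exists_good_vec (B * A i) (A i * B) hMne hNne
      obtain ⟨a, ha⟩ := vec_parallel ((B * A i).mulVec x) ((A i * B).mulVec x) (hkey i x) hMx
      set y : E2 := (WithLp.equiv 2 (Fin 2 → ℝ)).symm ((A i * B).mulVec x) with hy
      have hy0 : y ≠ 0 := by
        intro h
        exact hNx (by have := congrArg WithLp.ofLp h; rw [hy] at this; simpa using this)
      have hyN : y ∈ LinearMap.range (Matrix.toEuclideanLin (A i * B)) :=
        ⟨(WithLp.equiv 2 (Fin 2 → ℝ)).symm x, by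
          rfl⟩
      have hyB : y ∈ LinearMap.range (Matrix.toEuclideanLin B) := by
        refine ⟨(WithLp.equiv 2 (Fin 2 → ℝ)).symm (a • ((A i).mulVec x)), ?_⟩
        rw [hy, WithLp.equiv_symm_apply, Matrix.toEuclideanLin_apply_piLp_toLp, Matrix.mulVec_smul,
          Matrix.mulVec_mulVec, ← ha]
      have hr1 : Module.finrank ℝ (LinearMap.range (Matrix.toEuclideanLin (A i * B))) = 1 :=
        finrank_range_eq_one _ hNne (by rw [Matrix.det_mul, hdet0, mul_zero])
      have hrW : Module.finrank ℝ (LinearMap.range (Matrix.toEuclideanLin B)) = 1 :=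
        finrank_range_eq_one B hB0 hdet0
      have hspan : Module.finrank ℝ (Submodule.span ℝ ({y} : Set E2)) = 1 :=
        finrank_span_singleton hy0
      have h1 : Submodule.span ℝ ({y} : Set E2)
          = LinearMap.range (Matrix.toEuclideanLin (A i * B)) :=
        Submodule.eq_of_le_of_finrank_le
          ((Submodule.span_singleton_le_iff_mem _ _).2 hyN) (le_of_eq (hr1.trans hspan.symm))
      have h2 : Submodule.span ℝ ({y} : Set E2) = LinearMap.range (Matrix.toEuclideanLin B) :=
        Submodule.eq_of_le_of_finrank_le
          ((Submodule.span_singleton_le_iff_mem _ _).2 hyB) (le_of_eq (hrW.trans hspan.symm))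
      calc Submodule.map (Matrix.toEuclideanLin (A i)) (LinearMap.range (Matrix.toEuclideanLin B))
          = LinearMap.range (Matrix.toEuclideanLin (A i * B)) := by
            rw [toEL_mul, LinearMap.range_comp]
      _ = LinearMap.range (Matrix.toEuclideanLin B) := by rw [← h1, h2]

end
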